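/- arXiv:2506.05322 — 6 statements merged into one kernel-verified Lean document; each statement's English description precedes it below -/
import Mathlib

section
/- Let F : [a,b] → ℝ be a nondecreasing, absolutely continuous function with nonnegative values whose derivative is at most L > 0 almost everywhere. Then ∫_a^b F(t) dt ≥ (F(b)² − F(a)²) / (2L). -/
/-!
Integrating `F' ≤ L` over `[x, b]` gives `F x ≥ ℓ x := F b - L (b - x)`. Cut `[a, b]` at
`c = max a (b - F b / L)`: on `[a, c]` use only `F ≥ 0`, on `[c, b]` use `F ≥ ℓ`. The integral of `ℓ`
over `[c, b]` is `(F b ² - m ²) / (2L)` with `m = ℓ c = max 0 (F b - L (b - a)) ≤ F a`.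
-/

open MeasureTheory Set

section Primitive

variable {F F' : ℝ → ℝ} {a b L : ℝ}

lemma continuousOn_of_sub_eq_integral (hint : IntervalIntegrable F' volume a b)
    (hFTC : ∀ x ∈ Icc a b, F x - F a = ∫ t in a..x, F' t) : ContinuousOn F (Icc a b) := by
  rcases le_or_gt a b with hab | hba
  · have hprim : ContinuousOn (fun x => F a + ∫ t in a..x, F' t) (Icc a b) := by
      rw [← uIcc_of_le hab]
      exact continuousOn_const.add
        (intervalIntegral.continuousOn_primitive_interval' hint left_mem_uIcc)
    exact hprim.congr fun x hx => by linarith [hFTC x hx]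
  · simp [Icc_eq_empty_of_lt hba]

lemma sub_le_mul_sub_of_sub_eq_integral (hint : IntervalIntegrable F' volume a b)
    (hFTC : ∀ x ∈ Icc a b, F x - F a = ∫ t in a..x, F' t)
    (hbound : ∀ᵐ t ∂(volume.restrict (Icc a b)), F' t ≤ L) {x : ℝ} (hx : x ∈ Icc a b) :
    F b - F x ≤ L * (b - x) := by
  have hab : a ≤ b := hx.1.trans hx.2
  have hint_ax : IntervalIntegrable F' volume a x :=
    hint.mono_set (by simpa [uIcc_of_le hx.1, uIcc_of_le hab] using Icc_subset_Icc_right hx.2)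
  have hint_xb : IntervalIntegrable F' volume x b :=
    hint.mono_set (by simpa [uIcc_of_le hx.2, uIcc_of_le hab] using Icc_subset_Icc_left hx.1)
  calc F b - F x = ∫ t in x..b, F' t := by
        rw [← intervalIntegral.integral_interval_sub_left hint hint_ax,
          ← hFTC b (right_mem_Icc.2 hab), ← hFTC x hx]
        ring
    _ ≤ ∫ _ in x..b, L :=
        intervalIntegral.integral_mono_ae_restrict hx.2 hint_xb intervalIntegrable_const
          (ae_restrict_of_ae_restrict_of_subset (Icc_subset_Icc_left hx.1) hbound)
    _ = L * (b - x) := by simp [mul_comm]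

end Primitive

lemma integral_sub_mul_sub (y L c b : ℝ) (hL : L ≠ 0) :
    ∫ x in c..b, (y - L * (b - x)) = (y ^ 2 - (y - L * (b - c)) ^ 2) / (2 * L) := by
  rw [intervalIntegral.integral_comp_sub_left (fun x => y - L * x),
    intervalIntegral.integral_sub intervalIntegrable_const
      ((continuous_const_mul L).intervalIntegrable _ _),
    intervalIntegral.integral_const_mul]
  simp only [sub_self, intervalIntegral.integral_const, sub_zero, smul_eq_mul, integral_id]
  field_simp
  ring

lemma sq_sub_sq_div_le_integral_of_sub_le {G : ℝ → ℝ} {a b L : ℝ} (hab : a ≤ b) (hL : 0 < L)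
    (hG : IntervalIntegrable G volume a b) (hG_nonneg : ∀ x ∈ Icc a b, 0 ≤ G x)
    (hG_sub : ∀ x ∈ Icc a b, G b - G x ≤ L * (b - x)) :
    (G b ^ 2 - G a ^ 2) / (2 * L) ≤ ∫ x in a..b, G x := by
  have hGa := hG_nonneg a (left_mem_Icc.2 hab)
  have hGb := hG_nonneg b (right_mem_Icc.2 hab)
  obtain ⟨c, ⟨hac, hcb⟩, hm_nonneg, hm_le⟩ :
      ∃ c ∈ Icc a b, 0 ≤ G b - L * (b - c) ∧ G b - L * (b - c) ≤ G a := by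
    rcases le_total (b - G b / L) a with h | h
    · refine ⟨a, left_mem_Icc.2 hab, ?_, sub_le_comm.1 (hG_sub a (left_mem_Icc.2 hab))⟩
      rw [sub_le_comm, le_div_iff₀ hL] at h
      linarith
    · refine ⟨b - G b / L, ⟨h, sub_le_self _ (div_nonneg hGb hL.le)⟩, ?_⟩
      rw [sub_sub_cancel, mul_div_cancel₀ _ hL.ne', sub_self]
      exact ⟨le_rfl, hGa⟩
  calc (G b ^ 2 - G a ^ 2) / (2 * L)
      ≤ (G b ^ 2 - (G b - L * (b - c)) ^ 2) / (2 * L) := by gcongr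
    _ = ∫ x in c..b, (G b - L * (b - x)) := (integral_sub_mul_sub _ _ _ _ hL.ne').symm
    _ ≤ ∫ x in c..b, G x := by
        refine intervalIntegral.integral_mono_on hcb
          (Continuous.intervalIntegrable (by fun_prop) _ _) (hG.mono_set ?_) fun x hx => ?_
        · rw [uIcc_of_le hcb, uIcc_of_le hab]
          exact Icc_subset_Icc_left hac
        · linarith [hG_sub x ⟨hac.trans hx.1, hx.2⟩]
    _ ≤ ∫ x in a..b, G x :=
        intervalIntegral.integral_mono_interval hac hcb le_rfl
          (ae_restrict_of_forall_mem measurableSet_Ioc fun x hx =>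
            hG_nonneg x (Ioc_subset_Icc_self hx)) hG

theorem integral_ge_sq_diff_div_lipschitz_general (a b L : ℝ) (hab : a ≤ b) (hL : 0 < L)
    (F F' : ℝ → ℝ)
    (hnonneg : ∀ t ∈ Set.Icc a b, 0 ≤ F t)
    (hbound : ∀ᵐ t ∂(volume.restrict (Set.Icc a b)), F' t ≤ L)
    (hint : IntervalIntegrable F' volume a b)
    (hFTC : ∀ x ∈ Set.Icc a b, F x - F a = ∫ t in a..x, F' t) :
    (F b ^ 2 - F a ^ 2) / (2 * L) ≤ ∫ t in a..b, F t :=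
  sq_sub_sq_div_le_integral_of_sub_le hab hL
    ((continuousOn_of_sub_eq_integral hint hFTC).intervalIntegrable_of_Icc hab) hnonneg
    fun _ hx => sub_le_mul_sub_of_sub_eq_integral hint hFTC hbound hx

theorem integral_ge_sq_diff_div_lipschitz (a b L : ℝ) (hab : a ≤ b) (hL : 0 < L)
    (F F' : ℝ → ℝ)
    (hmono : MonotoneOn F (Set.Icc a b))
    (hnonneg : ∀ t ∈ Set.Icc a b, 0 ≤ F t)
    (hderiv : ∀ᵐ t ∂(volume.restrict (Set.Icc a b)), HasDerivAt F (F' t) t)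
    (hbound : ∀ᵐ t ∂(volume.restrict (Set.Icc a b)), F' t ≤ L)
    (hint : IntervalIntegrable F' volume a b)
    (hFTC : ∀ x ∈ Set.Icc a b, F x - F a = ∫ t in a..x, F' t) :
    (F b ^ 2 - F a ^ 2) / (2 * L) ≤ ∫ t in a..b, F t :=
  integral_ge_sq_diff_div_lipschitz_general a b L hab hL F F' hnonneg hbound hint hFTC
end

section
/- Let f^d : V → ℝ≥0 be a probability mass function on a finite set V ⊆ ℝ^n satisfying the affiliation (MTP₂) condition: f^d(v ⊔ v')·f^d(v ⊓ v') ≥ f^d(v)·f^d(v') for all v, v' ∈ V (with componentwise max/min), where f^d is extended by 0 outside V. Let δ > 0 be smaller than the minimum distance between distinct coordinates appearing in V. Define f^c : ℝ^n → ℝ≥0 by f^c(x) = f^d(v)/δ^n if x lies in the hyperrectangle [v₁, v₁+δ]×…×[vₙ, vₙ+δ] for some v ∈ V, and f^c(x) = 0 otherwise. Then f^c also satisfies the affiliation condition: f^c(x ⊔ x')·f^c(x ⊓ x') ≥ f^c(x)·f^c(x') for all x, x' ∈ ℝ^n. -/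
/-!
A point of a box `∏ᵢ [vᵢ, vᵢ + δ]` and a point of a box `∏ᵢ [v'ᵢ, v'ᵢ + δ]` have their join in the
box of `v ⊔ v'` and their meet in the box of `v ⊓ v'`. Hence, with `x, x'` in the boxes of `v, v'`,
`f^c(x) f^c(x') = f^d(v) f^d(v') / δ²ⁿ ≤ f^d(v ⊔ v') f^d(v ⊓ v') / δ²ⁿ ≤ f^c(x ⊔ x') f^c(x ⊓ x')`,
the last step because `f^c` is at least `f^d(u) / δⁿ` on the box of any `u`, in `V` or not.
-/

open Set

def Affiliated {β : Type*} [Lattice β] (f : β → ℝ) : Prop :=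
  ∀ x y, f x * f y ≤ f (x ⊔ y) * f (x ⊓ y)

section IccShift

variable {α : Type*} [Lattice α] [AddGroup α] [AddRightMono α] {a b v w d : α}

theorem sup_mem_Icc_add (ha : a ∈ Icc v (v + d)) (hb : b ∈ Icc w (w + d)) :
    a ⊔ b ∈ Icc (v ⊔ w) (v ⊔ w + d) :=
  ⟨sup_le_sup ha.1 hb.1, (sup_add v w d).symm ▸ sup_le_sup ha.2 hb.2⟩

theorem inf_mem_Icc_add (ha : a ∈ Icc v (v + d)) (hb : b ∈ Icc w (w + d)) :
    a ⊓ b ∈ Icc (v ⊓ w) (v ⊓ w + d) :=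
  ⟨inf_le_inf ha.1 hb.1, (inf_add v w d).symm ▸ inf_le_inf ha.2 hb.2⟩

end IccShift

/-- `fc` spreads the mass `fd v` of each `v ∈ V` uniformly over `cell v`, whose volume is `c`. -/
structure IsCellDensity {α β : Type*} (V : Set α) (cell : α → Set β) (c : ℝ) (fd : α → ℝ)
    (fc : β → ℝ) : Prop where
  eq_div : ∀ v ∈ V, ∀ x ∈ cell v, fc x = fd v / c
  eq_zero : ∀ x, (¬∃ v ∈ V, x ∈ cell v) → fc x = 0

namespace IsCellDensity

variable {α β : Type*} {V : Set α} {cell : α → Set β} {c : ℝ} {fd : α → ℝ} {fc : β → ℝ}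

theorem nonneg (h : IsCellDensity V cell c fd fc) (hc : 0 ≤ c) (hfd : ∀ v, 0 ≤ fd v) (x : β) :
    0 ≤ fc x := by
  by_cases hx : ∃ v ∈ V, x ∈ cell v
  · obtain ⟨v, hv, hxv⟩ := hx
    rw [h.eq_div v hv x hxv]
    exact div_nonneg (hfd v) hc
  · rw [h.eq_zero x hx]

theorem div_le_of_mem (h : IsCellDensity V cell c fd fc) (hc : 0 ≤ c) (hfd : ∀ v, 0 ≤ fd v)
    (hsupp : ∀ v ∉ V, fd v = 0) {u : α} {x : β} (hx : x ∈ cell u) : fd u / c ≤ fc x := by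
  by_cases hu : u ∈ V
  · exact (h.eq_div u hu x hx).ge
  · rw [hsupp u hu, zero_div]
    exact h.nonneg hc hfd x

theorem affiliated [Lattice α] [Lattice β] (h : IsCellDensity V cell c fd fc) (hc : 0 ≤ c)
    (hfd : ∀ v, 0 ≤ fd v) (hsupp : ∀ v ∉ V, fd v = 0) (haff : Affiliated fd)
    (hsup : ∀ v w x y, x ∈ cell v → y ∈ cell w → x ⊔ y ∈ cell (v ⊔ w))
    (hinf : ∀ v w x y, x ∈ cell v → y ∈ cell w → x ⊓ y ∈ cell (v ⊓ w)) :
    Affiliated fc := by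
  intro x y
  have hfc := h.nonneg hc hfd
  by_cases hx : ∃ v ∈ V, x ∈ cell v
  swap
  · rw [h.eq_zero x hx, zero_mul]
    exact mul_nonneg (hfc _) (hfc _)
  by_cases hy : ∃ w ∈ V, y ∈ cell w
  swap
  · rw [h.eq_zero y hy, mul_zero]
    exact mul_nonneg (hfc _) (hfc _)
  obtain ⟨v, hv, hxv⟩ := hx
  obtain ⟨w, hw, hyw⟩ := hy
  calc fc x * fc y = fd v * fd w / (c * c) := by
        rw [h.eq_div v hv x hxv, h.eq_div w hw y hyw, div_mul_div_comm]
    _ ≤ fd (v ⊔ w) * fd (v ⊓ w) / (c * c) :=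
        div_le_div_of_nonneg_right (haff v w) (mul_nonneg hc hc)
    _ = fd (v ⊔ w) / c * (fd (v ⊓ w) / c) := (div_mul_div_comm _ _ _ _).symm
    _ ≤ fc (x ⊔ y) * fc (x ⊓ y) :=
        mul_le_mul (h.div_le_of_mem hc hfd hsupp (hsup v w x y hxv hyw))
          (h.div_le_of_mem hc hfd hsupp (hinf v w x y hxv hyw))
          (div_nonneg (hfd _) hc) (hfc _)

end IsCellDensity

theorem affiliation_preserved_by_hyperrectangle_densification_general
    (n : ℕ) (V : Finset (Fin n → ℝ)) (fd : (Fin n → ℝ) → ℝ) (δ : ℝ) (hδ : 0 < δ)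
    (hnonneg : ∀ v, 0 ≤ fd v)
    (hsupp : ∀ v, v ∉ V → fd v = 0)
    (haff : ∀ v v' : Fin n → ℝ, fd v * fd v' ≤ fd (v ⊔ v') * fd (v ⊓ v'))
    (fc : (Fin n → ℝ) → ℝ)
    (hfc : ∀ (x : Fin n → ℝ) (v : Fin n → ℝ), v ∈ V →
      (∀ i, x i ∈ Set.Icc (v i) (v i + δ)) → fc x = fd v / δ ^ n)
    (hfc0 : ∀ x : Fin n → ℝ,
      (¬ ∃ v ∈ V, ∀ i, x i ∈ Set.Icc (v i) (v i + δ)) → fc x = 0) :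
    ∀ x x' : Fin n → ℝ, fc x * fc x' ≤ fc (x ⊔ x') * fc (x ⊓ x') := by
  let box : (Fin n → ℝ) → Set (Fin n → ℝ) := fun v ↦ {x | ∀ i, x i ∈ Icc (v i) (v i + δ)}
  have hdens : IsCellDensity (V : Set (Fin n → ℝ)) box (δ ^ n) fd fc :=
    ⟨fun v hv x hx ↦ hfc x v hv hx, hfc0⟩
  exact hdens.affiliated (pow_nonneg hδ.le n) hnonneg hsupp haff
    (fun _ _ _ _ hx hy i ↦ sup_mem_Icc_add (hx i) (hy i))
    (fun _ _ _ _ hx hy i ↦ inf_mem_Icc_add (hx i) (hy i))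

/-- Discretization of a discrete affiliated pmf into a piecewise-constant density
preserves the affiliation (MTP₂) condition. -/
theorem affiliation_preserved_by_hyperrectangle_densification
    (n : ℕ) (V : Finset (Fin n → ℝ)) (fd : (Fin n → ℝ) → ℝ) (δ : ℝ) (hδ : 0 < δ)
    (hnonneg : ∀ v, 0 ≤ fd v)
    (hsupp : ∀ v, v ∉ V → fd v = 0)
    (haff : ∀ v v' : Fin n → ℝ, fd v * fd v' ≤ fd (v ⊔ v') * fd (v ⊓ v'))
    (hδsmall : ∀ v ∈ V, ∀ v' ∈ V, ∀ i j : Fin n, v i ≠ v' j → δ < |v i - v' j|)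
    (fc : (Fin n → ℝ) → ℝ)
    (hfc : ∀ (x : Fin n → ℝ) (v : Fin n → ℝ), v ∈ V →
      (∀ i, x i ∈ Set.Icc (v i) (v i + δ)) → fc x = fd v / δ ^ n)
    (hfc0 : ∀ x : Fin n → ℝ,
      (¬ ∃ v ∈ V, ∀ i, x i ∈ Set.Icc (v i) (v i + δ)) → fc x = 0) :
    ∀ x x' : Fin n → ℝ, fc x * fc x' ≤ fc (x ⊔ x') * fc (x ⊓ x') :=
  affiliation_preserved_by_hyperrectangle_densification_general n V fd δ hδ hnonneg hsupp haff fc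
    hfc hfc0
end

section
/- Suppose H : B × V → ℝ≥0 is log-supermodular on the lattice B × V ⊆ ℝ² (with the componentwise order), where B is a finite set of bids and V ⊆ ℝ. Fix b^L < b^H in B and v^L < v^H in V with b^H ≤ v^L. Define u(b, v) = (v − b)·H(b, v). If u(b^H, v^H) < u(b^L, v^H) and H(max B, v^L) > 0 and H is nondecreasing in its first argument, then u(b^H, v^L) < u(b^L, v^L). -/
/-- Forward single-crossing condition from log-supermodularity of the winning
probability. -/
theorem forward_scc (B : Finset ℝ) (V : Set ℝ) (H : ℝ → ℝ → ℝ)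
    (hBne : B.Nonempty)
    (hHnonneg : ∀ b v, 0 ≤ H b v)
    (hlsm : ∀ b ∈ B, ∀ b' ∈ B, ∀ v ∈ V, ∀ v' ∈ V,
      H b v * H b' v' ≤ H (min b b') (min v v') * H (max b b') (max v v'))
    (hHmono : ∀ b ∈ B, ∀ b' ∈ B, b ≤ b' → ∀ v, H b v ≤ H b' v)
    (bL bH vL vH : ℝ) (hbL : bL ∈ B) (hbH : bH ∈ B) (hvL : vL ∈ V) (hvH : vH ∈ V)
    (h1 : bL < bH) (h2 : bH ≤ vL) (h3 : vL < vH)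
    (hmaxpos : 0 < H (B.max' hBne) vL)
    (hH : (vH - bH) * H bH vH < (vH - bL) * H bL vH) :
    (vL - bH) * H bH vL < (vL - bL) * H bL vL := by
  set M := B.max' hBne with hMdef
  have hM : M ∈ B := B.max'_mem hBne
  -- H bL vH > 0
  have hβ : 0 < H bL vH := by
    rcases lt_or_ge 0 (H bL vH) with h | h
    · exact h
    · have h0 : H bL vH = 0 := le_antisymm h (hHnonneg _ _)
      nlinarith [hHnonneg bH vH, mul_nonneg (by linarith : (0:ℝ) ≤ vH - bH) (hHnonneg bH vH)]
  -- monotonicity at vH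
  have hmonoV : H bL vH ≤ H bH vH := hHmono bL hbL bH hbH h1.le vH
  -- key crossing at vL for the vH-slice
  have claim : (vL - bH) * H bH vH < (vL - bL) * H bL vH := by
    nlinarith [mul_le_mul_of_nonneg_left hmonoV (by linarith : (0:ℝ) ≤ vH - vL)]
  -- log-supermodularity instance
  have hls : H bH vL * H bL vH ≤ H bL vL * H bH vH := by
    have := hlsm bH hbH bL hbL vL hvL vH hvH
    rwa [min_comm, min_eq_left h1.le, max_comm, max_eq_right h1.le,
      min_eq_left h3.le, max_eq_right h3.le] at this
  rcases eq_or_lt_of_le (hHnonneg bH vL) with h0 | hpos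
  · -- H bH vL = 0 : need H bL vL > 0 via max bid
    have hbLM : bL ≤ M := B.le_max' bL hbL
    have hls2 : H M vL * H bL vH ≤ H bL vL * H M vH := by
      have := hlsm M hM bL hbL vL hvL vH hvH
      rwa [min_comm, min_eq_left hbLM, max_comm, max_eq_right hbLM,
        min_eq_left h3.le, max_eq_right h3.le] at this
    have hpos2 : 0 < H bL vL := by
      nlinarith [hHnonneg bL vL, hHnonneg M vH, mul_pos hmaxpos hβ]
    have : H bH vL = 0 := h0.symm
    rw [this, mul_zero]
    exact mul_pos (by linarith) hpos2
  · -- H bH vL > 0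
    have hBLpos : 0 < H bL vL := by
      nlinarith [hHnonneg bL vL, hHnonneg bH vH, mul_pos hpos hβ]
    have step1 : (vL - bH) * (H bH vL * H bL vH) ≤ (vL - bH) * (H bL vL * H bH vH) :=
      mul_le_mul_of_nonneg_left hls (by linarith)
    have step2 : H bL vL * ((vL - bH) * H bH vH) < H bL vL * ((vL - bL) * H bL vH) :=
      mul_lt_mul_of_pos_left claim hBLpos
    have step3 : (vL - bH) * H bH vL * H bL vH < (vL - bL) * H bL vL * H bL vH := by
      nlinarith
    exact lt_of_mul_lt_mul_right step3 hβ.le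
end

section
/- Let β, β̃ : V → [0,1] with β(v) − ε̃ ≤ β̃(v) ≤ β(v) for all v ∈ V (ε̃-underapproximation), and suppose the conditional winning probability against β̃ satisfies G_v(b) ≤ H_v(b, β̃) ≤ G_v(b + ε̃) for all b, where G_v is the cdf of β(Y₁) conditioned on X₁ = v and H_v(b, β) = G_v(b). If moreover G_v(b₂) − G_v(b₁) ≤ γ·(b₂ − b₁) for all b₁ ≤ b₂ (a γ-Lipschitz concentration bound), then, defining u_v(b, β̂) = (v − b)·H_v(b, β̂) and with 0 ≤ β̃(v) ≤ β(v) ≤ v ≤ 1, we have: (a) u_v(β(v), β) ≤ u_v(β̃(v), β̃) + γ·ε̃, and (b) u_v(b, β̃) ≤ u_v(b, β) + γ·ε̃ for every b ∈ [0,1]. -/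
/-- Utility comparison inequalities for an ε̃-underapproximation of the canonical
equilibrium bidding strategy (bid densification lemma, inequalities (a) and (b)). -/
theorem underapprox_utility_bounds (v ε γ : ℝ) (βv β'v : ℝ)
    (G Hb : ℝ → ℝ)
    (hε : 0 ≤ ε) (hγ : 0 < γ)
    (h0 : 0 ≤ β'v) (hunder : βv - ε ≤ β'v) (hle : β'v ≤ βv)
    (hβv : βv ≤ v) (hv : v ≤ 1)
    (hGnonneg : ∀ b, 0 ≤ G b)
    (hGmono : Monotone G)
    (hH : ∀ b, G b ≤ Hb b ∧ Hb b ≤ G (b + ε))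
    (hGlip : ∀ b₁ b₂ : ℝ, b₁ ≤ b₂ → G b₂ - G b₁ ≤ γ * (b₂ - b₁)) :
    (v - βv) * G βv ≤ (v - β'v) * Hb β'v + γ * ε ∧
      ∀ b ∈ Set.Icc (0 : ℝ) 1, (v - b) * Hb b ≤ (v - b) * G b + γ * ε := by
  constructor
  · have h1 := (hH β'v).1
    have h2 := hGlip β'v βv hle
    have h3 := hGnonneg β'v
    have h4 : (v - βv) * G β'v ≤ (v - β'v) * Hb β'v := by
      apply mul_le_mul (by linarith) h1 h3 (by linarith)
    have h5 : (v - βv) * (G βv - G β'v) ≤ (v - βv) * (γ * (βv - β'v)) :=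
      mul_le_mul_of_nonneg_left h2 (by linarith)
    have h6 : (v - βv) * (γ * (βv - β'v)) ≤ 1 * (γ * ε) := by
      apply mul_le_mul (by linarith) (by nlinarith) (mul_nonneg hγ.le (by linarith)) zero_le_one
    nlinarith
  · intro b hb
    obtain ⟨hb0, hb1⟩ := hb
    have h1 := (hH b).1
    have h2 := (hH b).2
    have h3 := hGlip b (b + ε) (by linarith)
    have h4 := hGnonneg b
    rcases le_or_gt b v with h | h
    · nlinarith
    · nlinarith
end

section
/- Let g_t, G_t be families of densities and cdfs indexed by t ∈ [v̲, 1] such that for each fixed s, g_t(s)/G_t(s) is nondecreasing in t. Fix y ∈ support and v̲ ≤ t ≤ y, and suppose s ↦ ln G_y(s) is absolutely continuous on [t, y] with derivative g_y(s)/G_y(s) a.e. Then L_y(t) := exp(−∫_t^y g_s(s)/G_s(s) ds) ≥ G_y(t)/G_y(y). -/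
open MeasureTheory

/-- Property 5 of the affiliation-properties lemma:
`L_y(t) = exp(−∫_t^y g_s(s)/G_s(s) ds) ≥ G_y(t)/G_y(y)`. -/
theorem L_lower_bound (g G : ℝ → ℝ → ℝ) (vlow t y : ℝ)
    (hvt : vlow ≤ t) (hty : t ≤ y) (hy1 : y ≤ 1)
    (hratio_mono : ∀ s : ℝ, ∀ t₁ t₂ : ℝ, vlow ≤ t₁ → t₁ ≤ t₂ → t₂ ≤ 1 →
      g t₁ s / G t₁ s ≤ g t₂ s / G t₂ s)
    (hGt : 0 < G y t) (hGy : 0 < G y y)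
    (hint₁ : IntervalIntegrable (fun s => g s s / G s s) volume t y)
    (hint₂ : IntervalIntegrable (fun s => g y s / G y s) volume t y)
    (hFTC : ∫ s in t..y, g y s / G y s = Real.log (G y y) - Real.log (G y t)) :
    G y t / G y y ≤ Real.exp (-(∫ s in t..y, g s s / G s s)) := by
  have hle : (∫ s in t..y, g s s / G s s) ≤ ∫ s in t..y, g y s / G y s := by
    apply intervalIntegral.integral_mono_on hty hint₁ hint₂
    intro s hs
    exact hratio_mono s s y (hvt.trans hs.1) hs.2 hy1
  rw [hFTC] at hle
  calc G y t / G y y = Real.exp (-(Real.log (G y y) - Real.log (G y t))) := by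
        rw [neg_sub, Real.exp_sub, Real.exp_log hGt, Real.exp_log hGy]
    _ ≤ Real.exp (-(∫ s in t..y, g s s / G s s)) :=
        Real.exp_le_exp.mpr (neg_le_neg hle)
end

section
/- Consider the two-bidder discrete first-price auction with bidding space B = {0, 1/10, 2/10, …, 1} where the value pair (v₁, v₂) is uniform on {(0,1), (1/2,1/2), (1,0)}. Then there is no monotone mixed Bayes-Nash equilibrium (β₁, β₂) satisfying no-overbidding. Specifically: at any such equilibrium, bidder 1 with value 1 must bid 1/10 (pure), so monotonicity forces supp(β₁(1/2)) ⊆ {0, 1/10}; against any such strategy bidding 0 at value 1/2 is strictly dominated by bidding 1/10; but the symmetric profile of both bidding 1/10 at value 1/2 admits a profitable deviation to 2/10. -/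
/-! Non-existence of monotone mixed Bayes-Nash equilibria in the two-bidder
discrete first-price auction with bids `{0, 1/10, …, 1}` and value pairs
uniform on `{(0,1), (1/2,1/2), (1,0)}`.

Values are indexed by `Fin 3` via `val = ![0, 1/2, 1]`; the (deterministic)
conditional value of the opponent is given by `other = ![2, 1, 0]`
(value `0` pairs with `1`, `1/2` with `1/2`, `1` with `0`). Bids are indexed
by `Fin 11` via `bid k = k/10`. -/

/-- The `k`-th allowed bid, `k/10`. -/
noncomputable def FPA.bid (k : Fin 11) : ℝ := (k : ℕ) / 10

/-- The `i`-th value, from `![0, 1/2, 1]`. -/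
noncomputable def FPA.val : Fin 3 → ℝ := ![0, 1/2, 1]

/-- Index of the opponent's value conditioned on one's own value index. -/
def FPA.other : Fin 3 → Fin 3 := ![2, 1, 0]

/-- Ex-post utility of bidding `b₁` against `b₂` with value `v`, under
uniform tie-breaking. -/
noncomputable def FPA.expost (b₁ b₂ v : ℝ) : ℝ :=
  if b₂ < b₁ then v - b₁ else if b₁ = b₂ then (v - b₁) / 2 else 0

/-- Interim utility of bidding `bid k` at value `val i` when the opponent plays
the mixed strategy `σ` (probability `σ i' k'` of bidding `bid k'` at value
`val i'`). -/
noncomputable def FPA.interim (σ : Fin 3 → Fin 11 → ℝ) (i : Fin 3) (k : Fin 11) : ℝ :=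
  ∑ j : Fin 11, σ (FPA.other i) j * FPA.expost (FPA.bid k) (FPA.bid j) (FPA.val i)

/-- `σ` is a valid mixed strategy. -/
noncomputable def FPA.valid (σ : Fin 3 → Fin 11 → ℝ) : Prop :=
  (∀ i k, 0 ≤ σ i k) ∧ ∀ i, (∑ k : Fin 11, σ i k) = 1

/-- `σ` is monotone: any bid in the support at a lower value is at most any bid
in the support at a higher value. -/
def FPA.monotoneStrat (σ : Fin 3 → Fin 11 → ℝ) : Prop :=
  ∀ i i' : Fin 3, i < i' → ∀ k k' : Fin 11,
    0 < σ i k → 0 < σ i' k' → FPA.bid k ≤ FPA.bid k'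

/-- `σ` never overbids. -/
def FPA.noOverbid (σ : Fin 3 → Fin 11 → ℝ) : Prop :=
  ∀ i k, 0 < σ i k → FPA.bid k ≤ FPA.val i

/-- `σ₁` best-responds to `σ₂` at every value. -/
def FPA.bestResponds (σ₁ σ₂ : Fin 3 → Fin 11 → ℝ) : Prop :=
  ∀ i : Fin 3, ∀ k : Fin 11,
    FPA.interim σ₂ i k ≤ ∑ k' : Fin 11, σ₁ i k' * FPA.interim σ₂ i k'

/-!
At value `0` no-overbidding forces the bid `0`, so a bidder with value `1` faces a sure bid of
`0` and his unique best response is `1/10`. Monotonicity then confines the bids at value `1/2`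
to `{0, 1/10}`; against such an opponent `1/10` strictly beats `0`, so both bidders bid `1/10`
at value `1/2`, and then the deviation to `2/10` (payoff `3/10` instead of `1/5`) is profitable.
-/

lemma weight_eq_zero_of_lt_of_forall_le_sum {ι : Type*} [Fintype ι] {w u : ι → ℝ}
    (hw : ∀ k, 0 ≤ w k) (hsum : ∑ k, w k = 1) (hbr : ∀ k, u k ≤ ∑ k', w k' * u k')
    {k j : ι} (hkj : u k < u j) : w k = 0 := by
  set M := ∑ k', w k' * u k'
  have hterm : ∀ k' ∈ Finset.univ, 0 ≤ w k' * (M - u k') := fun k' _ =>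
    mul_nonneg (hw k') (sub_nonneg.2 (hbr k'))
  have hzero : ∑ k', w k' * (M - u k') = 0 := by
    simp only [mul_sub, Finset.sum_sub_distrib, ← Finset.sum_mul, hsum, one_mul, sub_self, M]
  have hk := (Finset.sum_eq_zero_iff_of_nonneg hterm).1 hzero k (Finset.mem_univ k)
  exact (mul_eq_zero.1 hk).resolve_right (by linarith [hbr j])

lemma eq_pi_single_of_sum_eq_one {ι : Type*} [Fintype ι] [DecidableEq ι] {w : ι → ℝ} {k₀ : ι}
    (hsum : ∑ k, w k = 1) (h : ∀ k, k ≠ k₀ → w k = 0) : w = Pi.single k₀ 1 := by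
  rw [Fintype.sum_eq_single k₀ h] at hsum
  ext k
  obtain rfl | hk := eq_or_ne k k₀
  · simp [hsum]
  · simp [h k hk, hk]

lemma eq_pi_single_of_forall_lt {ι : Type*} [Fintype ι] [DecidableEq ι] {w u : ι → ℝ} {k₀ : ι}
    (hw : ∀ k, 0 ≤ w k) (hsum : ∑ k, w k = 1) (hbr : ∀ k, u k ≤ ∑ k', w k' * u k')
    (hu : ∀ k, k ≠ k₀ → u k < u k₀) : w = Pi.single k₀ 1 :=
  eq_pi_single_of_sum_eq_one hsum fun k hk =>
    weight_eq_zero_of_lt_of_forall_le_sum hw hsum hbr (hu k hk)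

lemma sum_mul_of_eq_pi_single {ι : Type*} [Fintype ι] [DecidableEq ι] {w : ι → ℝ} {k₀ : ι}
    (hw : w = Pi.single k₀ 1) (f : ι → ℝ) : ∑ j, w j * f j = f k₀ := by
  simp [hw, Pi.single_apply]

namespace FPA

lemma bid_strictMono : StrictMono bid := fun k k' h => by
  unfold bid
  gcongr
  exact_mod_cast h

lemma sum_mul_of_forall_one_lt {w : Fin 11 → ℝ} (hw : ∀ j, 1 < j → w j = 0)
    (f : Fin 11 → ℝ) : ∑ j, w j * f j = w 0 * f 0 + w 1 * f 1 := by
  have hout : ∀ j : Fin 11, j ∉ ({0, 1} : Finset (Fin 11)) → 1 < j := by decide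
  rw [← Finset.sum_subset (Finset.subset_univ {0, 1}) fun j _ hj => by
    rw [hw j (hout j hj), zero_mul]]
  simp

lemma interim_of_eq_pi_single {σ : Fin 3 → Fin 11 → ℝ} {i : Fin 3} {k₀ : Fin 11}
    (hσ : σ (other i) = Pi.single k₀ 1) (k : Fin 11) :
    interim σ i k = expost (bid k) (bid k₀) (val i) :=
  sum_mul_of_eq_pi_single hσ _

lemma valid.eq_pi_single_zero_of_noOverbid {σ : Fin 3 → Fin 11 → ℝ} (hσ : valid σ)
    (hno : noOverbid σ) : σ 0 = Pi.single 0 1 := by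
  refine eq_pi_single_of_sum_eq_one (hσ.2 0) fun k hk => ?_
  by_contra hne
  have hbid := hno 0 k ((hσ.1 0 k).lt_of_ne' hne)
  have hpos : bid 0 < bid k := bid_strictMono (Fin.pos_iff_ne_zero.2 hk)
  have hval : val 0 = bid 0 := by simp [val, bid]
  linarith

lemma valid.eq_pi_single_of_bestResponds_top {σ₁ σ₂ : Fin 3 → Fin 11 → ℝ} (hσ₁ : valid σ₁)
    (hσ₂ : valid σ₂) (hno : noOverbid σ₂) (hbr : bestResponds σ₁ σ₂) :
    σ₁ 2 = Pi.single 1 1 := by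
  have hu := interim_of_eq_pi_single (i := 2) (hσ₂.eq_pi_single_zero_of_noOverbid hno)
  refine eq_pi_single_of_forall_lt (hσ₁.1 2) (hσ₁.2 2) (hbr 2) fun k hk => ?_
  rw [hu, hu, show val 2 = 1 from rfl]
  fin_cases k <;> simp at hk <;> norm_num [expost, bid]

lemma monotoneStrat.eq_zero_of_lt {σ : Fin 3 → Fin 11 → ℝ} (hmono : monotoneStrat σ)
    (hnn : ∀ i k, 0 ≤ σ i k) {i i' : Fin 3} (hii' : i < i') {k₀ : Fin 11}
    (hpure : σ i' = Pi.single k₀ 1) {k : Fin 11} (hk : k₀ < k) : σ i k = 0 := by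
  by_contra hne
  have hbid := hmono i i' hii' k k₀ ((hnn i k).lt_of_ne' hne) (by simp [hpure])
  exact (bid_strictMono hk).not_ge hbid

lemma interim_one_of_forall_one_lt {σ : Fin 3 → Fin 11 → ℝ} (hσ : ∀ j, 1 < j → σ 1 j = 0)
    (k : Fin 11) :
    interim σ 1 k =
      σ 1 0 * expost (bid k) (bid 0) (val 1) + σ 1 1 * expost (bid k) (bid 1) (val 1) :=
  sum_mul_of_forall_one_lt hσ _

lemma valid.eq_pi_single_of_bestResponds_mid {σ₁ σ₂ : Fin 3 → Fin 11 → ℝ} (hσ₁ : valid σ₁)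
    (hσ₂ : valid σ₂) (hbr : bestResponds σ₁ σ₂) (h₁ : ∀ j, 1 < j → σ₁ 1 j = 0)
    (h₂ : ∀ j, 1 < j → σ₂ 1 j = 0) : σ₁ 1 = Pi.single 1 1 := by
  have hsum₂ : σ₂ 1 0 + σ₂ 1 1 = 1 := by
    have h := sum_mul_of_forall_one_lt h₂ fun _ => 1
    simp only [mul_one] at h
    rw [← h, hσ₂.2 1]
  have hlt : interim σ₂ 1 0 < interim σ₂ 1 1 := by
    rw [interim_one_of_forall_one_lt h₂, interim_one_of_forall_one_lt h₂]
    norm_num [expost, bid, val]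
    nlinarith [hσ₂.1 1 0, hσ₂.1 1 1]
  have hzero := weight_eq_zero_of_lt_of_forall_le_sum (hσ₁.1 1) (hσ₁.2 1) (hbr 1) hlt
  refine eq_pi_single_of_sum_eq_one (hσ₁.2 1) fun k hk => ?_
  rcases lt_trichotomy k 1 with hk0 | rfl | hk1
  · rwa [(Fin.lt_one_iff _).1 hk0]
  · exact absurd rfl hk
  · exact h₁ k hk1

end FPA

open FPA in
/-- There is no monotone, no-overbidding mixed Bayes-Nash equilibrium of this
auction. -/
theorem no_monotone_MBNE :
    ¬ ∃ σ₁ σ₂ : Fin 3 → Fin 11 → ℝ,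
      FPA.valid σ₁ ∧ FPA.valid σ₂ ∧
      FPA.monotoneStrat σ₁ ∧ FPA.monotoneStrat σ₂ ∧
      FPA.noOverbid σ₁ ∧ FPA.noOverbid σ₂ ∧
      FPA.bestResponds σ₁ σ₂ ∧ FPA.bestResponds σ₂ σ₁ := by
  rintro ⟨σ₁, σ₂, hv₁, hv₂, hm₁, hm₂, hn₁, hn₂, hbr₁, hbr₂⟩
  have top₁ := hv₁.eq_pi_single_of_bestResponds_top hv₂ hn₂ hbr₁
  have top₂ := hv₂.eq_pi_single_of_bestResponds_top hv₁ hn₁ hbr₂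
  have low₁ : ∀ j, 1 < j → σ₁ 1 j = 0 := fun j => hm₁.eq_zero_of_lt hv₁.1 (by decide) top₁
  have low₂ : ∀ j, 1 < j → σ₂ 1 j = 0 := fun j => hm₂.eq_zero_of_lt hv₂.1 (by decide) top₂
  have mid₁ := hv₁.eq_pi_single_of_bestResponds_mid hv₂ hbr₁ low₁ low₂
  have mid₂ := hv₂.eq_pi_single_of_bestResponds_mid hv₁ hbr₂ low₂ low₁
  have hdev := hbr₁ 1 2
  rw [sum_mul_of_eq_pi_single mid₁, interim_of_eq_pi_single mid₂,
    interim_of_eq_pi_single mid₂] at hdev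
  norm_num [expost, bid, val] at hdev
end
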